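/- arXiv:2507.03279 — 6 statements merged into one kernel-verified Lean document; each statement's English description precedes it below -/
import Mathlib

section
/- Suppose α ∈ (0, 1/2), α' ∈ [0, α], and the set-valued predictor C : 𝒳 → Finset 𝒴 satisfies 1 − α ≤ P(Y ∈ C(X)) ≤ 1 − α'. Then H(Y|X) ≤ h_b(α) + α·log|𝒴| − (1 − α')·log(1 − α) + (1 − α')·log E[|C(X)|]. -/
open Finset

noncomputable def binEnt (p : ℝ) : ℝ := -(p * Real.log p) - (1 - p) * Real.log (1 - p)

/-!
Gibbs' inequality bounds `H(Y|X)` by `-E[log r(Y|X)]` for any positive kernel `r` with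
`∑ₓ μ_X(x) ∑_y r(y|x) ≤ 1`. Take `r(y|x) = (1 - α) / E[|C(X)|]` on `C(x)` and `α / |𝒴|` off it.
Then `-E[log r(Y|X)] = W log(E[|C(X)|] / (1 - α)) + (1 - W) log(|𝒴| / α)` for the coverage `W`,
and `1 - α ≤ W ≤ 1 - α'`, `W ≤ E[|C(X)|]` turn this into the bound.
-/

open Real

lemma mul_log_sub_mul_log_div_le {a b c : ℝ} (ha : 0 ≤ a) (hac : a ≤ c) (hb : 0 < b) :
    a * log b - a * log (a / c) ≤ c * b - a := by
  rcases ha.eq_or_lt with rfl | ha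
  · simpa using mul_nonneg hac hb.le
  have hc : 0 < c := ha.trans_le hac
  have h := log_le_sub_one_of_pos (x := b / (a / c)) (by positivity)
  rw [log_div hb.ne' (by positivity)] at h
  calc a * log b - a * log (a / c) = a * (log b - log (a / c)) := by ring
    _ ≤ a * (b / (a / c) - 1) := mul_le_mul_of_nonneg_left h ha.le
    _ = c * b - a := by field_simp

lemma sum_mul_ite_mem {ι : Type*} [Fintype ι] [DecidableEq ι] (s : Finset ι) (f : ι → ℝ)
    (u v : ℝ) :
    ∑ i, f i * (if i ∈ s then u else v) = (∑ i ∈ s, f i) * u + (∑ i, f i - ∑ i ∈ s, f i) * v := by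
  rw [← sum_add_sum_compl s f, add_sub_cancel_left, sum_mul, sum_mul, ← sum_add_sum_compl s]
  congr 1 <;> refine sum_congr rfl fun i hi => ?_
  · rw [if_pos hi]
  · rw [if_neg (mem_compl.mp hi)]

section

variable {𝒳 𝒴 : Type*} [Fintype 𝒳] [Fintype 𝒴]

noncomputable def condEntropy (μ : 𝒳 → 𝒴 → ℝ) : ℝ :=
  -∑ x, ∑ y, μ x y * log (μ x y / ∑ y', μ x y')

noncomputable def coverage (μ : 𝒳 → 𝒴 → ℝ) (C : 𝒳 → Finset 𝒴) : ℝ := ∑ x, ∑ y ∈ C x, μ x y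

noncomputable def expectedSize (μ : 𝒳 → 𝒴 → ℝ) (C : 𝒳 → Finset 𝒴) : ℝ :=
  ∑ x, (∑ y, μ x y) * (#(C x) : ℝ)

lemma condEntropy_le_neg_sum_mul_log (μ : 𝒳 → 𝒴 → ℝ) (hμ0 : ∀ x y, 0 ≤ μ x y)
    (r : 𝒳 → 𝒴 → ℝ) (hr : ∀ x y, 0 < r x y)
    (hmass : ∑ x, ∑ y, (∑ y', μ x y') * r x y ≤ ∑ x, ∑ y, μ x y) :
    condEntropy μ ≤ -∑ x, ∑ y, μ x y * log (r x y) := by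
  have hpoint : ∀ x y, μ x y * log (r x y) - μ x y * log (μ x y / ∑ y', μ x y')
      ≤ (∑ y', μ x y') * r x y - μ x y := fun x y =>
    mul_log_sub_mul_log_div_le (hμ0 x y)
      (single_le_sum (fun y' _ => hμ0 x y') (mem_univ y)) (hr x y)
  have hsum := sum_le_sum fun x (_ : x ∈ univ) => sum_le_sum fun y (_ : y ∈ univ) => hpoint x y
  simp only [sum_sub_distrib] at hsum
  rw [condEntropy]
  linarith

lemma coverage_le_expectedSize (μ : 𝒳 → 𝒴 → ℝ) (hμ0 : ∀ x y, 0 ≤ μ x y)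
    (C : 𝒳 → Finset 𝒴) : coverage μ C ≤ expectedSize μ C := by
  refine sum_le_sum fun x _ => ?_
  calc ∑ y ∈ C x, μ x y ≤ ∑ _y ∈ C x, ∑ y', μ x y' :=
        sum_le_sum fun y _ => single_le_sum (fun y' _ => hμ0 x y') (mem_univ y)
    _ = (∑ y, μ x y) * #(C x) := by rw [sum_const, nsmul_eq_mul, mul_comm]

variable [DecidableEq 𝒴]

lemma sum_sum_mul_ite_mem (μ : 𝒳 → 𝒴 → ℝ) (C : 𝒳 → Finset 𝒴) (u v : ℝ) :
    ∑ x, ∑ y, μ x y * (if y ∈ C x then u else v)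
      = coverage μ C * u + (∑ x, ∑ y, μ x y - coverage μ C) * v := by
  simp only [sum_mul_ite_mem, sum_add_distrib, ← sum_mul, sum_sub_distrib, coverage]

lemma sum_sum_marginal_mul_ite_mem_le (μ : 𝒳 → 𝒴 → ℝ) (hμ0 : ∀ x y, 0 ≤ μ x y)
    (C : 𝒳 → Finset 𝒴) (u : ℝ) {v : ℝ} (hv : 0 ≤ v) :
    ∑ x, ∑ y, (∑ y', μ x y') * (if y ∈ C x then u else v)
      ≤ expectedSize μ C * u + Fintype.card 𝒴 * v * ∑ x, ∑ y, μ x y := by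
  have hrow : ∀ x, ∑ y, (if y ∈ C x then u else v) ≤ #(C x) * u + Fintype.card 𝒴 * v := by
    intro x
    have h := sum_mul_ite_mem (C x) 1 u v
    simp only [Pi.one_apply, one_mul, sum_const, nsmul_eq_mul, mul_one, card_univ] at h
    rw [h]
    nlinarith [(#(C x)).cast_nonneg (α := ℝ)]
  calc ∑ x, ∑ y, (∑ y', μ x y') * (if y ∈ C x then u else v)
      ≤ ∑ x, (∑ y', μ x y') * (#(C x) * u + Fintype.card 𝒴 * v) := by
        simp only [← mul_sum]
        exact sum_le_sum fun x _ =>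
          mul_le_mul_of_nonneg_left (hrow x) (sum_nonneg fun y _ => hμ0 x y)
    _ = expectedSize μ C * u + Fintype.card 𝒴 * v * ∑ x, ∑ y, μ x y := by
        rw [expectedSize, sum_mul, mul_sum, ← sum_add_distrib]
        exact sum_congr rfl fun x _ => by ring

end

lemma conformal_cross_entropy_le {α α' W S N : ℝ} (hα0 : 0 < α) (hα1 : α < 1) (hN : 1 ≤ N)
    (hW_lo : 1 - α ≤ W) (hW_hi : W ≤ 1 - α') (hWS : W ≤ S) :
    -(W * log ((1 - α) / S) + (1 - W) * log (α / N))
      ≤ binEnt α + α * log N - (1 - α') * log (1 - α) + (1 - α') * log S := by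
  have h1α : 0 < 1 - α := by linarith
  rw [log_div h1α.ne' (by linarith), log_div hα0.ne' (by linarith)]
  have hlogα : log α ≤ log N := log_le_log hα0 (by linarith)
  have hlogS : log (1 - α) ≤ log S := log_le_log h1α (by linarith)
  have hlog1α : log (1 - α) ≤ 0 := log_nonpos h1α.le (by linarith)
  unfold binEnt
  nlinarith [mul_le_mul_of_nonneg_right hW_hi (sub_nonneg.2 hlogS),
    mul_le_mul_of_nonneg_right (show 1 - W ≤ α by linarith) (sub_nonneg.2 hlogα),
    mul_nonneg h1α.le (neg_nonneg.2 hlog1α)]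

theorem conditional_entropy_le_conformal_bound_general
    {𝒳 𝒴 : Type*} [Fintype 𝒳] [Fintype 𝒴] [Nonempty 𝒴]
    (μ : 𝒳 → 𝒴 → ℝ)
    (hμ0 : ∀ x y, 0 ≤ μ x y)
    (hμ1 : ∑ x, ∑ y, μ x y = 1)
    (C : 𝒳 → Finset 𝒴)
    (α α' : ℝ) (hα0 : 0 < α) (hα2 : α < 1 / 2)
    (hcov_lo : 1 - α ≤ ∑ x, ∑ y ∈ C x, μ x y)
    (hcov_hi : ∑ x, ∑ y ∈ C x, μ x y ≤ 1 - α') :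
    (-∑ x, ∑ y, μ x y * Real.log (μ x y / ∑ y', μ x y'))
      ≤ binEnt α + α * Real.log (Fintype.card 𝒴)
        - (1 - α') * Real.log (1 - α)
        + (1 - α') * Real.log (∑ x, (∑ y, μ x y) * ((C x).card : ℝ)) := by
  classical
  set N : ℝ := (Fintype.card 𝒴 : ℝ)
  set S := expectedSize μ C
  have hN : 1 ≤ N := Nat.one_le_cast.2 Fintype.card_pos
  have hWS := coverage_le_expectedSize μ hμ0 C
  have hS : 0 < S := by unfold coverage at hWS; linarith
  have hent := condEntropy_le_neg_sum_mul_log μ hμ0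
    (fun x y => if y ∈ C x then (1 - α) / S else α / N)
    (fun x y => by split_ifs <;> exact div_pos (by linarith) (by linarith))
    ((sum_sum_marginal_mul_ite_mem_le μ hμ0 C _ (by positivity)).trans_eq
      (by field_simp; rw [hμ1]; ring))
  simp only [apply_ite log, sum_sum_mul_ite_mem, hμ1] at hent
  exact hent.trans (conformal_cross_entropy_le hα0 (by linarith) hN hcov_lo hcov_hi hWS)

/-- For a probability mass function `μ` on `𝒳 × 𝒴` with coordinates `(X, Y)`,
if the set-valued predictor `C` has coverage `P(Y ∈ C(X)) ∈ [1 - α, 1 - α']` with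
`α ∈ (0, 1/2)` and `α' ∈ [0, α]`, then
`H(Y|X) ≤ h_b(α) + α log|𝒴| - (1 - α') log(1 - α) + (1 - α') log E[|C(X)|]`. -/
theorem conditional_entropy_le_conformal_bound
    {𝒳 𝒴 : Type*} [Fintype 𝒳] [Fintype 𝒴] [Nonempty 𝒳] [Nonempty 𝒴]
    (μ : 𝒳 → 𝒴 → ℝ)
    (hμ0 : ∀ x y, 0 ≤ μ x y)
    (hμ1 : ∑ x, ∑ y, μ x y = 1)
    (C : 𝒳 → Finset 𝒴)
    (α α' : ℝ) (hα0 : 0 < α) (hα2 : α < 1 / 2)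
    (hα'0 : 0 ≤ α') (hα'α : α' ≤ α)
    (hcov_lo : 1 - α ≤ ∑ x, ∑ y ∈ C x, μ x y)
    (hcov_hi : ∑ x, ∑ y ∈ C x, μ x y ≤ 1 - α') :
    (-∑ x, ∑ y, μ x y * Real.log (μ x y / ∑ y', μ x y'))
      ≤ binEnt α + α * Real.log (Fintype.card 𝒴)
        - (1 - α') * Real.log (1 - α)
        + (1 - α') * Real.log (∑ x, (∑ y, μ x y) * ((C x).card : ℝ)) :=
  conditional_entropy_le_conformal_bound_general μ hμ0 hμ1 C α α' hα0 hα2 hcov_lo hcov_hi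
end

section
/- Let C : 𝒳 → Finset 𝒴 be a set-valued predictor and set β = P(Y ∉ C(X)) = 1 − P(Y ∈ C(X)). If β < 1, then H(Y|X) ≤ h_b(β) + β·log|𝒴| + (1 − β)·E[log|C(X)| | Y ∈ C(X)]. -/
open Finset

/-!
Gibbs' inequality bounds the conditional entropy `H(Y|X)` by the cross entropy
`-∑ μ(x,y) log r(x,y)` against any sub-stochastic kernel `r` charging the support of `μ`.
Take `r(x,y) = (1 - β)/|C(x)|` for `y ∈ C(x)` and `r(x,y) = β/|𝒴|` otherwise: each row has mass
at most `(1 - β) + β = 1`, and the cross entropy against `r` is exactly the right-hand side.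
-/

open Real

theorem mul_log_sub_mul_log_le {p q : ℝ} (hp : 0 ≤ p) (hq : 0 ≤ q) (hpq : 0 < p → 0 < q) :
    p * log q - p * log p ≤ q - p := by
  rcases hp.eq_or_lt with rfl | hp
  · simpa using hq
  have hq := hpq hp
  calc p * log q - p * log p = p * log (q / p) := by rw [log_div hq.ne' hp.ne']; ring
    _ ≤ p * (q / p - 1) := by gcongr; exact log_le_sub_one_of_pos (div_pos hq hp)
    _ = q - p := by field_simp

/-- Gibbs' inequality. -/
theorem neg_sum_mul_log_le_neg_sum_mul_log {ι : Type*} {s : Finset ι} {p q : ι → ℝ}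
    (hp : ∀ i ∈ s, 0 ≤ p i) (hq : ∀ i ∈ s, 0 ≤ q i) (hpq : ∀ i ∈ s, 0 < p i → 0 < q i)
    (hsum : ∑ i ∈ s, q i ≤ ∑ i ∈ s, p i) :
    -∑ i ∈ s, p i * log (p i) ≤ -∑ i ∈ s, p i * log (q i) := by
  have := sum_le_sum fun i hi => mul_log_sub_mul_log_le (hp i hi) (hq i hi) (hpq i hi)
  rw [sum_sub_distrib, sum_sub_distrib] at this
  linarith

theorem neg_sum_mul_log_div_sum_le {ι : Type*} {s : Finset ι} {w q : ι → ℝ}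
    (hw : ∀ i ∈ s, 0 ≤ w i) (hq : ∀ i ∈ s, 0 ≤ q i) (hwq : ∀ i ∈ s, 0 < w i → 0 < q i)
    (hq1 : ∑ i ∈ s, q i ≤ 1) :
    -∑ i ∈ s, w i * log (w i / ∑ j ∈ s, w j) ≤ -∑ i ∈ s, w i * log (q i) := by
  set S := ∑ j ∈ s, w j
  rcases (sum_nonneg hw).eq_or_lt with hS | hS
  · have hw0 : ∀ i ∈ s, w i = 0 := (sum_eq_zero_iff_of_nonneg hw).1 hS.symm
    have hzero : ∀ f : ι → ℝ, ∑ i ∈ s, w i * f i = 0 := fun f =>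
      sum_eq_zero fun i hi => by rw [hw0 i hi, zero_mul]
    rw [hzero, hzero]
  have hS0 : S ≠ 0 := hS.ne'
  have hgibbs := neg_sum_mul_log_le_neg_sum_mul_log (s := s) (p := fun i => w i / S)
    (fun i hi => div_nonneg (hw i hi) hS.le) hq
    (fun i hi hpos => hwq i hi ((div_pos_iff_of_pos_right hS).1 hpos))
    (by rwa [← sum_div, div_self hS0])
  have hscale : ∀ f : ι → ℝ, S * ∑ i ∈ s, w i / S * f i = ∑ i ∈ s, w i * f i := fun f => by
    rw [mul_sum]; exact sum_congr rfl fun i _ => by field_simp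
  have := mul_le_mul_of_nonneg_left hgibbs hS.le
  rwa [mul_neg, mul_neg, hscale, hscale] at this

section Coverage

variable {𝒳 𝒴 : Type*} [Fintype 𝒴]

theorem neg_sum_sum_mul_log_div_sum_le [Fintype 𝒳] {μ r : 𝒳 → 𝒴 → ℝ} (hμ0 : ∀ x y, 0 ≤ μ x y)
    (hr0 : ∀ x y, 0 ≤ r x y) (hr1 : ∀ x, ∑ y, r x y ≤ 1)
    (hμr : ∀ x y, 0 < μ x y → 0 < r x y) :
    -∑ x, ∑ y, μ x y * log (μ x y / ∑ y', μ x y') ≤ -∑ x, ∑ y, μ x y * log (r x y) := by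
  simp only [← sum_neg_distrib]
  refine sum_le_sum fun x _ => ?_
  simpa only [sum_neg_distrib] using neg_sum_mul_log_div_sum_le (fun y _ => hμ0 x y)
    (fun y _ => hr0 x y) (fun y _ => hμr x y) (hr1 x)

variable [DecidableEq 𝒴]

noncomputable def coverageKernel (C : 𝒳 → Finset 𝒴) (β : ℝ) (x : 𝒳) (y : 𝒴) : ℝ :=
  if y ∈ C x then (1 - β) / #(C x) else β / Fintype.card 𝒴

variable {C : 𝒳 → Finset 𝒴} {β : ℝ}

theorem coverageKernel_nonneg (hβ0 : 0 ≤ β) (hβ1 : β ≤ 1) (x : 𝒳) (y : 𝒴) :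
    0 ≤ coverageKernel C β x y := by
  unfold coverageKernel
  split_ifs <;> positivity

theorem sum_coverageKernel_le_one [Nonempty 𝒴] (hβ0 : 0 ≤ β) (hβ1 : β ≤ 1) (x : 𝒳) :
    ∑ y, coverageKernel C β x y ≤ 1 := by
  have hcovered : ∑ y ∈ C x, coverageKernel C β x y ≤ 1 - β := by
    rw [sum_congr rfl fun y hy => by rw [coverageKernel, if_pos hy], sum_const, nsmul_eq_mul]
    rcases (C x).eq_empty_or_nonempty with hC | hC
    · simpa [hC] using hβ1
    · rw [mul_div_cancel₀ _ (Nat.cast_ne_zero.2 hC.card_pos.ne')]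
  have hmissed : ∑ y ∈ (C x)ᶜ, coverageKernel C β x y ≤ β := calc
    _ = ∑ y ∈ (C x)ᶜ, β / Fintype.card 𝒴 := sum_congr rfl fun y hy => by
      rw [coverageKernel, if_neg (mem_compl.1 hy)]
    _ ≤ ∑ y, β / Fintype.card 𝒴 :=
      sum_le_sum_of_subset_of_nonneg (subset_univ _) fun _ _ _ => by positivity
    _ = β := by
      rw [sum_const, card_univ, nsmul_eq_mul,
        mul_div_cancel₀ _ (Nat.cast_ne_zero.2 Fintype.card_ne_zero)]
  linarith [sum_add_sum_compl (C x) (coverageKernel C β x)]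

theorem sum_sum_compl_eq_of_sum_sum_eq_one [Fintype 𝒳] {μ : 𝒳 → 𝒴 → ℝ}
    (hμ1 : ∑ x, ∑ y, μ x y = 1) (hβ : β = 1 - ∑ x, ∑ y ∈ C x, μ x y) :
    ∑ x, ∑ y ∈ (C x)ᶜ, μ x y = β := by
  rw [hβ, ← hμ1, eq_sub_iff_add_eq, ← sum_add_distrib]
  exact sum_congr rfl fun x _ => sum_compl_add_sum (C x) (μ x)

theorem coverageKernel_pos [Fintype 𝒳] {μ : 𝒳 → 𝒴 → ℝ} (hμ0 : ∀ x y, 0 ≤ μ x y)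
    (hmiss : ∑ x, ∑ y ∈ (C x)ᶜ, μ x y = β) (hβ1 : β < 1) {x : 𝒳} {y : 𝒴} (hxy : 0 < μ x y) :
    0 < coverageKernel C β x y := by
  unfold coverageKernel
  split_ifs with hy
  · exact div_pos (sub_pos.2 hβ1) (Nat.cast_pos.2 (card_pos.2 ⟨y, hy⟩))
  · refine div_pos ?_ (Nat.cast_pos.2 (Fintype.card_pos_iff.2 ⟨y⟩))
    rw [← hmiss]
    refine hxy.trans_le ((single_le_sum (fun y _ => hμ0 x y) (mem_compl.2 hy)).trans ?_)
    exact single_le_sum (f := fun x => ∑ y ∈ (C x)ᶜ, μ x y)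
      (fun x _ => sum_nonneg fun y _ => hμ0 x y) (mem_univ x)

theorem neg_sum_sum_mul_log_coverageKernel [Fintype 𝒳] [Nonempty 𝒴] {μ : 𝒳 → 𝒴 → ℝ}
    (hcov : ∑ x, ∑ y ∈ C x, μ x y = 1 - β) (hmiss : ∑ x, ∑ y ∈ (C x)ᶜ, μ x y = β)
    (hβ1 : β ≠ 1) :
    -∑ x, ∑ y, μ x y * log (coverageKernel C β x y)
      = binEnt β + β * log (Fintype.card 𝒴) + ∑ x, ∑ y ∈ C x, μ x y * log #(C x) := by
  have hrow : ∀ x, ∑ y, μ x y * log (coverageKernel C β x y)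
      = ∑ y ∈ C x, μ x y * log (1 - β) - ∑ y ∈ C x, μ x y * log #(C x)
        + ∑ y ∈ (C x)ᶜ, μ x y * log (β / Fintype.card 𝒴) := fun x => by
    rw [← sum_add_sum_compl (C x), ← sum_sub_distrib]
    congr 1
    · refine sum_congr rfl fun y hy => ?_
      rw [coverageKernel, if_pos hy, log_div (sub_ne_zero.2 hβ1.symm)
        (Nat.cast_ne_zero.2 (card_pos.2 ⟨y, hy⟩).ne')]
      ring
    · exact sum_congr rfl fun y hy => by rw [coverageKernel, if_neg (mem_compl.1 hy)]
  simp only [hrow, sum_add_distrib, sum_sub_distrib, ← sum_mul, hcov, hmiss]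
  rcases eq_or_ne β 0 with rfl | hβ0
  · simp [binEnt]
  · rw [log_div hβ0 (Nat.cast_ne_zero.2 Fintype.card_ne_zero), binEnt]
    ring

end Coverage

theorem conditional_entropy_le_miscoverage_bound_general
    {𝒳 𝒴 : Type*} [Fintype 𝒳] [Fintype 𝒴] [Nonempty 𝒴]
    (μ : 𝒳 → 𝒴 → ℝ)
    (hμ0 : ∀ x y, 0 ≤ μ x y)
    (hμ1 : ∑ x, ∑ y, μ x y = 1)
    (C : 𝒳 → Finset 𝒴)
    (β : ℝ)
    (hβ : β = 1 - ∑ x, ∑ y ∈ C x, μ x y)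
    (hβ1 : β < 1) :
    (-∑ x, ∑ y, μ x y * Real.log (μ x y / ∑ y', μ x y'))
      ≤ binEnt β + β * Real.log (Fintype.card 𝒴)
        + (1 - β) * ((∑ x, ∑ y ∈ C x, μ x y)⁻¹
            * ∑ x, ∑ y ∈ C x, μ x y * Real.log ((C x).card : ℝ)) := by
  classical
  have hcov : ∑ x, ∑ y ∈ C x, μ x y = 1 - β := by rw [hβ]; ring
  have hmiss := sum_sum_compl_eq_of_sum_sum_eq_one hμ1 hβ
  have hβ0 : 0 ≤ β := hmiss ▸ sum_nonneg fun x _ => sum_nonneg fun y _ => hμ0 x y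
  calc _ ≤ -∑ x, ∑ y, μ x y * log (coverageKernel C β x y) :=
        neg_sum_sum_mul_log_div_sum_le hμ0 (coverageKernel_nonneg hβ0 hβ1.le)
          (sum_coverageKernel_le_one hβ0 hβ1.le) fun _ _ => coverageKernel_pos hμ0 hmiss hβ1
    _ = _ := neg_sum_sum_mul_log_coverageKernel hcov hmiss hβ1.ne
    _ = _ := by rw [hcov, ← mul_assoc, mul_inv_cancel₀ (sub_ne_zero.2 hβ1.ne'), one_mul]

/-- For a probability mass function `μ` on `𝒳 × 𝒴` with coordinates `(X, Y)`
and a set-valued predictor `C`, let `β = P(Y ∉ C(X)) = 1 - P(Y ∈ C(X))`.  If `β < 1`, then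
`H(Y|X) ≤ h_b(β) + β log|𝒴| + (1 - β) E[log|C(X)| ∣ Y ∈ C(X)]`. -/
theorem conditional_entropy_le_miscoverage_bound
    {𝒳 𝒴 : Type*} [Fintype 𝒳] [Fintype 𝒴] [Nonempty 𝒳] [Nonempty 𝒴]
    (μ : 𝒳 → 𝒴 → ℝ)
    (hμ0 : ∀ x y, 0 ≤ μ x y)
    (hμ1 : ∑ x, ∑ y, μ x y = 1)
    (C : 𝒳 → Finset 𝒴)
    (β : ℝ)
    (hβ : β = 1 - ∑ x, ∑ y ∈ C x, μ x y)
    (hβ1 : β < 1) :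
    (-∑ x, ∑ y, μ x y * Real.log (μ x y / ∑ y', μ x y'))
      ≤ binEnt β + β * Real.log (Fintype.card 𝒴)
        + (1 - β) * ((∑ x, ∑ y ∈ C x, μ x y)⁻¹
            * ∑ x, ∑ y ∈ C x, μ x y * Real.log ((C x).card : ℝ)) :=
  conditional_entropy_le_miscoverage_bound_general μ hμ0 hμ1 C β hβ hβ1
end

section
/- If the set-valued predictor C : 𝒳 → Finset 𝒴 satisfies P(Y ∈ C(X)) = 1, then H(Y|X) ≤ E[log|C(X)|] ≤ log E[|C(X)|], where E[log|C(X)|] = ∑_x μ_X(x)·log|C(x)| (for every x in the support of μ_X the set C(x) is nonempty, and terms with μ_X(x) = 0 contribute zero). -/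
/-!
Full coverage forces `μ x y = 0` whenever `y ∉ C x`. Both inequalities are then Jensen's inequality
for the concave `log`: for fixed `x`, with weights `μ(y | x)` at the points `1 / μ(y | x)`, whose
weighted mean is at most `|C x|`; and over `x`, with weights `μ_X x` at the points `|C x|`.
-/

open Finset Real

theorem sum_mul_log_le_log_of_sum_mul_le {ι : Type*} (t : Finset ι) {w p : ι → ℝ} {c : ℝ}
    (hw₀ : ∀ i ∈ t, 0 ≤ w i) (hw₁ : ∑ i ∈ t, w i = 1) (hp : ∀ i ∈ t, w i ≠ 0 → 0 < p i)
    (hc : ∑ i ∈ t, w i * p i ≤ c) :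
    ∑ i ∈ t, w i * log (p i) ≤ log c := by
  classical
  have restrict (g : ι → ℝ) : ∑ i ∈ t with w i ≠ 0, w i * g i = ∑ i ∈ t, w i * g i :=
    sum_filter_of_ne fun _ _ h ↦ left_ne_zero_of_mul h
  have hw₁' : ∑ i ∈ t with w i ≠ 0, w i = 1 := (sum_filter_ne_zero t).trans hw₁
  have hpos : 0 < ∑ i ∈ t, w i * p i := by
    rw [← restrict]
    refine sum_pos (fun i hi ↦ ?_) (nonempty_of_sum_ne_zero (hw₁'.trans_ne one_ne_zero))
    obtain ⟨hit, hwi⟩ := mem_filter.mp hi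
    exact mul_pos ((hw₀ i hit).lt_of_ne' hwi) (hp i hit hwi)
  calc ∑ i ∈ t, w i * log (p i)
      = ∑ i ∈ t with w i ≠ 0, w i • log (p i) := (restrict _).symm
    _ ≤ log (∑ i ∈ t with w i ≠ 0, w i • p i) :=
        strictConcaveOn_log_Ioi.concaveOn.le_map_sum (fun i hi ↦ hw₀ i (mem_filter.mp hi).1) hw₁'
          fun i hi ↦ hp i (mem_filter.mp hi).1 (mem_filter.mp hi).2
    _ = log (∑ i ∈ t, w i * p i) := congrArg log (restrict p)
    _ ≤ log c := log_le_log hpos hc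

theorem neg_sum_mul_log_div_sum_le_mul_log_card {ι : Type*} [Fintype ι] {f : ι → ℝ}
    (hf : ∀ i, 0 ≤ f i) (S : Finset ι) (hS : ∀ i ∉ S, f i = 0) :
    -∑ i, f i * log (f i / ∑ j, f j) ≤ (∑ j, f j) * log #S := by
  set s := ∑ j, f j
  have hs₀ : 0 ≤ s := sum_nonneg fun i _ ↦ hf i
  obtain hs | hs := hs₀.eq_or_lt
  · have hf₀ : ∀ i, f i = 0 := fun i ↦ (sum_eq_zero_iff_of_nonneg fun j _ ↦ hf j).mp hs.symm i
      (mem_univ i)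
    simp [hf₀, ← hs]
  have hS_sum : ∑ i ∈ S, f i = s := sum_subset (subset_univ S) fun i _ hi ↦ hS i hi
  have jensen : ∑ i ∈ S, f i / s * log (s / f i) ≤ log #S := by
    refine sum_mul_log_le_log_of_sum_mul_le S (fun i _ ↦ div_nonneg (hf i) hs.le)
      (by rw [← sum_div, hS_sum, div_self hs.ne']) (fun i _ hi ↦ ?_) ?_
    · exact div_pos hs ((hf i).lt_of_ne' (div_ne_zero_iff.mp hi).1)
    · calc ∑ i ∈ S, f i / s * (s / f i) ≤ ∑ _i ∈ S, (1 : ℝ) := sum_le_sum fun i _ ↦ by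
            rw [div_mul_div_comm, mul_comm s]; exact div_self_le_one _
        _ = #S := by simp
  calc -∑ i, f i * log (f i / s)
      = s * ∑ i ∈ S, f i / s * log (s / f i) := by
        rw [← sum_subset (subset_univ S) fun i _ hi ↦ by simp [hS i hi], mul_sum,
          ← sum_neg_distrib]
        refine sum_congr rfl fun i _ ↦ ?_
        rw [← inv_div, log_inv]
        field_simp
    _ ≤ s * log #S := mul_le_mul_of_nonneg_left jensen hs.le

theorem eq_zero_of_notMem_of_sum_sum_eq {ι κ : Type*} [Fintype ι] [Fintype κ] {μ : ι → κ → ℝ}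
    (hμ : ∀ x y, 0 ≤ μ x y) (C : ι → Finset κ) (h : ∑ x, ∑ y ∈ C x, μ x y = ∑ x, ∑ y, μ x y)
    {x : ι} {y : κ} (hy : y ∉ C x) : μ x y = 0 := by
  refine ((hμ x y).eq_or_lt.resolve_right fun hpos ↦ h.not_lt ?_).symm
  refine sum_lt_sum (fun x' _ ↦ sum_le_sum_of_subset_of_nonneg (subset_univ _)
    fun y' _ _ ↦ hμ x' y') ⟨x, mem_univ x, ?_⟩
  exact sum_lt_sum_of_subset (subset_univ _) (mem_univ y) hy hpos fun y' _ _ ↦ hμ x y'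

theorem conditional_entropy_le_expected_log_size_of_full_coverage_general
    {𝒳 𝒴 : Type*} [Fintype 𝒳] [Fintype 𝒴]
    (μ : 𝒳 → 𝒴 → ℝ)
    (hμ0 : ∀ x y, 0 ≤ μ x y)
    (hμ1 : ∑ x, ∑ y, μ x y = 1)
    (C : 𝒳 → Finset 𝒴)
    (hcov : ∑ x, ∑ y ∈ C x, μ x y = 1) :
    (-∑ x, ∑ y, μ x y * Real.log (μ x y / ∑ y', μ x y'))
        ≤ ∑ x, (∑ y, μ x y) * Real.log ((C x).card : ℝ)
      ∧ ∑ x, (∑ y, μ x y) * Real.log ((C x).card : ℝ)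
        ≤ Real.log (∑ x, (∑ y, μ x y) * ((C x).card : ℝ)) := by
  have hsupp : ∀ x y, y ∉ C x → μ x y = 0 := fun x y ↦
    eq_zero_of_notMem_of_sum_sum_eq hμ0 C (hcov.trans hμ1.symm)
  constructor
  · rw [← sum_neg_distrib]
    exact sum_le_sum fun x _ ↦ neg_sum_mul_log_div_sum_le_mul_log_card (hμ0 x) (C x) (hsupp x)
  · refine sum_mul_log_le_log_of_sum_mul_le univ (fun x _ ↦ sum_nonneg fun y _ ↦ hμ0 x y) hμ1
      (fun x _ hx ↦ ?_) le_rfl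
    obtain ⟨y, hy⟩ := exists_ne_zero_of_sum_ne_zero hx
    exact Nat.cast_pos.mpr (card_pos.mpr ⟨y, by_contra fun h ↦ hy.2 (hsupp x y h)⟩)

/-- For a probability mass function `μ` on `𝒳 × 𝒴` with coordinates `(X, Y)`,
if the set-valued predictor `C` has full coverage `P(Y ∈ C(X)) = 1`, then
`H(Y|X) ≤ E[log|C(X)|] ≤ log E[|C(X)|]`. -/
theorem conditional_entropy_le_expected_log_size_of_full_coverage
    {𝒳 𝒴 : Type*} [Fintype 𝒳] [Fintype 𝒴] [Nonempty 𝒳] [Nonempty 𝒴]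
    (μ : 𝒳 → 𝒴 → ℝ)
    (hμ0 : ∀ x y, 0 ≤ μ x y)
    (hμ1 : ∑ x, ∑ y, μ x y = 1)
    (C : 𝒳 → Finset 𝒴)
    (hcov : ∑ x, ∑ y ∈ C x, μ x y = 1) :
    (-∑ x, ∑ y, μ x y * Real.log (μ x y / ∑ y', μ x y'))
        ≤ ∑ x, (∑ y, μ x y) * Real.log ((C x).card : ℝ)
      ∧ ∑ x, (∑ y, μ x y) * Real.log ((C x).card : ℝ)
        ≤ Real.log (∑ x, (∑ y, μ x y) * ((C x).card : ℝ)) :=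
  conditional_entropy_le_expected_log_size_of_full_coverage_general μ hμ0 hμ1 C hcov
end

section
/- Let A ⊆ 𝒳 be an event with μ_X(A) > 0 and let μ_A be the conditional distribution μ( · | X ∈ A) on 𝒳 × 𝒴. Let Q be a finite nonempty family of queries q : 𝒳 → 𝒜 with 𝒜 a finite type. Suppose α ∈ (0, 1/2), α' ∈ [0, α], and for each q ∈ Q there is a set-valued map C_q : 𝒜 → Finset 𝒴 satisfying 1 − α ≤ P_{μ_A}(Y ∈ C_q(q(X))) ≤ 1 − α'. Then min_{q ∈ Q} H_{μ_A}(Y | q(X)) ≤ min_{q ∈ Q} [ h_b(α) + α·log|𝒴| − (1 − α')·log(1 − α) + (1 − α')·log E_{μ_A}[|C_q(q(X))|] ]. -/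
/-!
By Gibbs' inequality, `H(Y | q(X))` is at most the cross entropy `-E[log s(q(X), Y)]` against any
positive kernel `s` whose total mass, averaged over `q(X)`, is at most `1`. Take
`s(a, y) = (1 - α) / E|C_q(q(X))|` for `y ∈ C_q(a)` and `s(a, y) = α / |𝒴|` otherwise. With
coverage `β`, the cross entropy is `β log (E|C_q| / (1 - α)) + (1 - β) log (|𝒴| / α)`, and
`1 - α ≤ β ≤ 1 - α'` bounds it by the conformal bound of `q`. This holds for every `q ∈ Q`,
so it also holds for the minima.
-/

open Finset

section

variable {𝒳 𝒴 𝒜 : Type*} [Fintype 𝒳] [Fintype 𝒴] [Fintype 𝒜] [DecidableEq 𝒜]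

/-- Joint probability `P(q(X) = a, Y = y)` under the pmf `ν` on `𝒳 × 𝒴`. -/
def jointProb (ν : 𝒳 → 𝒴 → ℝ) (q : 𝒳 → 𝒜) (a : 𝒜) (y : 𝒴) : ℝ :=
  ∑ x, if q x = a then ν x y else 0

/-- Marginal probability `P(q(X) = a)` under the pmf `ν` on `𝒳 × 𝒴`. -/
def queryProb (ν : 𝒳 → 𝒴 → ℝ) (q : 𝒳 → 𝒜) (a : 𝒜) : ℝ :=
  ∑ x, if q x = a then (∑ y, ν x y) else 0

/-- Conditional entropy `H(Y | q(X))` under the pmf `ν` on `𝒳 × 𝒴`. -/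
noncomputable def condEntQ (ν : 𝒳 → 𝒴 → ℝ) (q : 𝒳 → 𝒜) : ℝ :=
  -∑ a, ∑ y, jointProb ν q a y * Real.log (jointProb ν q a y / queryProb ν q a)

end

open Real

lemma neg_mul_log_div_le {p P s : ℝ} (hp : 0 ≤ p) (hpP : p ≤ P) (hs : 0 < s) :
    -(p * log (p / P)) ≤ P * s - p - p * log s := by
  rcases hp.eq_or_lt with rfl | hp
  · simpa using mul_nonneg hpP hs.le
  have hP : 0 < P := hp.trans_le hpP
  have hlog : p * log (P * s / p) ≤ P * s - p := by
    have := mul_le_mul_of_nonneg_left (log_le_sub_one_of_pos (by positivity : 0 < P * s / p)) hp.le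
    rwa [mul_sub, mul_div_cancel₀ _ hp.ne', mul_one] at this
  rw [log_div (by positivity) hp.ne', log_mul hP.ne' hs.ne'] at hlog
  rw [log_div hp.ne' hP.ne']
  linarith

lemma crossEntropy_le_conformalBound {α α' β S : ℝ} (L : ℕ) (hα0 : 0 < α) (hα1 : α < 1)
    (hlo : 1 - α ≤ β) (hhi : β ≤ 1 - α') (hβS : β ≤ S) :
    β * (log S - log (1 - α)) + (1 - β) * (log L - log α)
      ≤ binEnt α + α * log L - (1 - α') * log (1 - α) + (1 - α') * log S := by
  have hS : log (1 - α) ≤ log S := log_le_log (by linarith) (by linarith)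
  have hα : log α ≤ log L := (log_neg hα0 hα1).le.trans (log_natCast_nonneg L)
  have h1 : 0 ≤ (1 - α' - β) * (log S - log (1 - α)) := mul_nonneg (by linarith) (by linarith)
  have h2 : 0 ≤ (β - (1 - α)) * (log L - log α) := mul_nonneg (by linarith) (by linarith)
  have h3 : 0 ≤ (1 - α) * -log (1 - α) :=
    mul_nonneg (by linarith) (neg_nonneg.2 (log_nonpos (by linarith) (by linarith)))
  unfold binEnt
  linarith

section

variable {𝒳 𝒴 𝒜 : Type*} [Fintype 𝒳] [DecidableEq 𝒜] (ν : 𝒳 → 𝒴 → ℝ) (q : 𝒳 → 𝒜)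

lemma jointProb_nonneg (hν : ∀ x y, 0 ≤ ν x y) (a : 𝒜) (y : 𝒴) : 0 ≤ jointProb ν q a y :=
  Finset.sum_nonneg fun x _ => by split_ifs <;> simp [hν]

variable [Fintype 𝒴]

lemma queryProb_eq_sum_jointProb (a : 𝒜) : queryProb ν q a = ∑ y, jointProb ν q a y := by
  simp only [queryProb, jointProb]
  rw [Finset.sum_comm]
  simp [Finset.sum_ite]

lemma jointProb_le_queryProb (hν : ∀ x y, 0 ≤ ν x y) (a : 𝒜) (y : 𝒴) :
    jointProb ν q a y ≤ queryProb ν q a := by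
  rw [queryProb_eq_sum_jointProb]
  exact Finset.single_le_sum (fun y _ => jointProb_nonneg ν q hν a y) (Finset.mem_univ y)

variable [Fintype 𝒜]

lemma sum_jointProb_mul (g : 𝒜 → 𝒴 → ℝ) :
    ∑ a, ∑ y, jointProb ν q a y * g a y = ∑ x, ∑ y, ν x y * g (q x) y := by
  simp only [jointProb, Finset.sum_mul, ite_mul, zero_mul]
  rw [Finset.sum_comm]
  simp_rw [Finset.sum_comm (s := (Finset.univ : Finset 𝒜)) (t := (Finset.univ : Finset 𝒳))]
  simp only [Finset.sum_ite_eq, Finset.mem_univ, if_true]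
  exact Finset.sum_comm

lemma sum_queryProb_mul (f : 𝒜 → ℝ) :
    ∑ a, queryProb ν q a * f a = ∑ x, ∑ y, ν x y * f (q x) := by
  simp only [queryProb_eq_sum_jointProb, Finset.sum_mul]
  exact sum_jointProb_mul ν q fun a _ => f a

lemma condEntQ_le_crossEntropy (hν : ∀ x y, 0 ≤ ν x y) (s : 𝒜 → 𝒴 → ℝ)
    (hs : ∀ a y, 0 < s a y) :
    condEntQ ν q ≤ ∑ a, queryProb ν q a * ∑ y, s a y - ∑ x, ∑ y, ν x y
      - ∑ x, ∑ y, ν x y * log (s (q x) y) := by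
  calc condEntQ ν q
        = ∑ a, ∑ y, -(jointProb ν q a y * log (jointProb ν q a y / queryProb ν q a)) := by
        simp [condEntQ, Finset.sum_neg_distrib]
    _ ≤ ∑ a, ∑ y, (queryProb ν q a * s a y - jointProb ν q a y
          - jointProb ν q a y * log (s a y)) :=
        Finset.sum_le_sum fun a _ => Finset.sum_le_sum fun y _ =>
          neg_mul_log_div_le (jointProb_nonneg ν q hν a y) (jointProb_le_queryProb ν q hν a y)
            (hs a y)
    _ = _ := by
        simp only [Finset.sum_sub_distrib, Finset.mul_sum]
        rw [sum_jointProb_mul ν q fun a y => log (s a y)]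
        simpa using sum_jointProb_mul ν q fun _ _ => 1

end

section

variable {𝒳 𝒴 𝒜 : Type*} [Fintype 𝒳] [Fintype 𝒴] [DecidableEq 𝒴]

lemma coverage_le_sum_mul_card (ν : 𝒳 → 𝒴 → ℝ) (hν : ∀ x y, 0 ≤ ν x y) (q : 𝒳 → 𝒜)
    (C : 𝒜 → Finset 𝒴) :
    ∑ x, ∑ y, (if y ∈ C (q x) then ν x y else 0) ≤ ∑ x, ∑ y, ν x y * ((C (q x)).card : ℝ) := by
  refine Finset.sum_le_sum fun x _ => Finset.sum_le_sum fun y _ => ?_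
  split_ifs with hy
  · exact le_mul_of_one_le_right (hν x y) (by exact_mod_cast Finset.card_pos.2 ⟨y, hy⟩)
  · exact mul_nonneg (hν x y) (Nat.cast_nonneg _)

/-- The reference kernel fed to Gibbs' inequality; when `S` is the expected prediction-set size,
its average total mass is at most `1`. -/
noncomputable def conformalKernel (C : 𝒜 → Finset 𝒴) (α S : ℝ) (a : 𝒜) (y : 𝒴) : ℝ :=
  if y ∈ C a then (1 - α) / S else α / Fintype.card 𝒴

variable (C : 𝒜 → Finset 𝒴) {α S : ℝ}

lemma conformalKernel_pos (hα0 : 0 < α) (hα1 : α < 1) (hS : 0 < S) (a : 𝒜) (y : 𝒴) :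
    0 < conformalKernel C α S a y := by
  have : 0 < (Fintype.card 𝒴 : ℝ) := by exact_mod_cast Fintype.card_pos_iff.2 ⟨y⟩
  unfold conformalKernel
  split_ifs <;> apply div_pos <;> linarith

lemma sum_conformalKernel_le [Nonempty 𝒴] (hα0 : 0 ≤ α) (a : 𝒜) :
    ∑ y, conformalKernel C α S a y ≤ (C a).card * ((1 - α) / S) + α := by
  have hL : (Fintype.card 𝒴 : ℝ) ≠ 0 := by exact_mod_cast Fintype.card_ne_zero
  have hpoint : ∀ y, conformalKernel C α S a y
      ≤ (if y ∈ C a then (1 - α) / S else 0) + α / Fintype.card 𝒴 := by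
    intro y
    have : 0 ≤ α / Fintype.card 𝒴 := by positivity
    unfold conformalKernel
    split_ifs <;> linarith
  calc ∑ y, conformalKernel C α S a y
      ≤ ∑ y, ((if y ∈ C a then (1 - α) / S else 0) + α / Fintype.card 𝒴) :=
        Finset.sum_le_sum fun y _ => hpoint y
    _ = (C a).card * ((1 - α) / S) + α := by
        rw [Finset.sum_add_distrib, Finset.sum_ite_mem, Finset.univ_inter, Finset.sum_const,
          Finset.sum_const, Finset.card_univ, nsmul_eq_mul, nsmul_eq_mul, mul_div_cancel₀ _ hL]

lemma neg_sum_mul_log_conformalKernel (ν : 𝒳 → 𝒴 → ℝ)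
    (hν : ∑ x, ∑ y, ν x y = 1) (q : 𝒳 → 𝒜) (hα0 : 0 < α) (hα1 : α < 1) (hS : 0 < S) :
    -∑ x, ∑ y, ν x y * log (conformalKernel C α S (q x) y)
      = (∑ x, ∑ y, if y ∈ C (q x) then ν x y else 0) * (log S - log (1 - α))
        + (1 - ∑ x, ∑ y, if y ∈ C (q x) then ν x y else 0)
          * (log (Fintype.card 𝒴) - log α) := by
  have hterm : ∀ x y, -(ν x y * log (conformalKernel C α S (q x) y))
      = (if y ∈ C (q x) then ν x y else 0) * (log S - log (1 - α))
        + (ν x y - if y ∈ C (q x) then ν x y else 0) * (log (Fintype.card 𝒴) - log α) := by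
    intro x y
    have hL : (Fintype.card 𝒴 : ℝ) ≠ 0 := by exact_mod_cast Fintype.card_pos_iff.2 ⟨y⟩ |>.ne'
    unfold conformalKernel
    split_ifs
    · rw [log_div (by linarith) hS.ne']; ring
    · rw [log_div hα0.ne' hL]; ring
  simp only [← Finset.sum_neg_distrib, hterm, Finset.sum_add_distrib, ← Finset.sum_mul,
    Finset.sum_sub_distrib, hν]

end

section

variable {𝒳 𝒴 𝒜 : Type*} [Fintype 𝒳] [Fintype 𝒴] [Fintype 𝒜] [DecidableEq 𝒜] [DecidableEq 𝒴]
  [Nonempty 𝒴]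

theorem condEntQ_le_conformalBound (ν : 𝒳 → 𝒴 → ℝ) (hν0 : ∀ x y, 0 ≤ ν x y)
    (hν1 : ∑ x, ∑ y, ν x y = 1) (q : 𝒳 → 𝒜) (C : 𝒜 → Finset 𝒴) {α α' : ℝ} (hα0 : 0 < α)
    (hα1 : α < 1) (hlo : 1 - α ≤ ∑ x, ∑ y, if y ∈ C (q x) then ν x y else 0)
    (hhi : (∑ x, ∑ y, if y ∈ C (q x) then ν x y else 0) ≤ 1 - α') :
    condEntQ ν q ≤ binEnt α + α * log (Fintype.card 𝒴) - (1 - α') * log (1 - α)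
      + (1 - α') * log (∑ x, ∑ y, ν x y * ((C (q x)).card : ℝ)) := by
  set S := ∑ x, ∑ y, ν x y * ((C (q x)).card : ℝ)
  have hβS := coverage_le_sum_mul_card ν hν0 q C
  have hS : 0 < S := by linarith
  have hmass : ∑ a, queryProb ν q a * ∑ y, conformalKernel C α S a y ≤ 1 :=
    calc ∑ a, queryProb ν q a * ∑ y, conformalKernel C α S a y
        ≤ ∑ a, queryProb ν q a * ((C a).card * ((1 - α) / S) + α) := by
          simp only [sum_queryProb_mul]
          exact Finset.sum_le_sum fun x _ => Finset.sum_le_sum fun y _ =>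
            mul_le_mul_of_nonneg_left (sum_conformalKernel_le C hα0.le _) (hν0 x y)
      _ = S * ((1 - α) / S) + (∑ x, ∑ y, ν x y) * α := by
          rw [sum_queryProb_mul]
          simp only [S, mul_add, Finset.sum_add_distrib, Finset.sum_mul, mul_assoc]
      _ = 1 := by rw [hν1]; field_simp; ring
  have hgibbs := condEntQ_le_crossEntropy ν q hν0 _ (conformalKernel_pos C hα0 hα1 hS)
  have hcross := neg_sum_mul_log_conformalKernel C ν hν1 q hα0 hα1 hS
  have hbound := crossEntropy_le_conformalBound (Fintype.card 𝒴) hα0 hα1 hlo hhi hβS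
  linarith

end

lemma conditional_nonneg {𝒳 𝒴 : Type*} [Fintype 𝒴] [DecidableEq 𝒳] (μ : 𝒳 → 𝒴 → ℝ)
    (hμ : ∀ x y, 0 ≤ μ x y) (A : Finset 𝒳) (μA : 𝒳 → 𝒴 → ℝ)
    (hμA : ∀ x y, μA x y = if x ∈ A then μ x y / (∑ x' ∈ A, ∑ y', μ x' y') else 0) (x : 𝒳)
    (y : 𝒴) : 0 ≤ μA x y := by
  rw [hμA]
  split_ifs
  · exact div_nonneg (hμ x y) (Finset.sum_nonneg fun x _ => Finset.sum_nonneg fun y _ => hμ x y)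
  · rfl

lemma sum_conditional_eq_one {𝒳 𝒴 : Type*} [Fintype 𝒳] [Fintype 𝒴] [DecidableEq 𝒳]
    (μ : 𝒳 → 𝒴 → ℝ) (A : Finset 𝒳) (hA : 0 < ∑ x ∈ A, ∑ y, μ x y) (μA : 𝒳 → 𝒴 → ℝ)
    (hμA : ∀ x y, μA x y = if x ∈ A then μ x y / (∑ x' ∈ A, ∑ y', μ x' y') else 0) :
    ∑ x, ∑ y, μA x y = 1 := by
  simp only [hμA, Finset.sum_ite_irrel, Finset.sum_const_zero, Finset.sum_ite_mem,
    Finset.univ_inter, ← Finset.sum_div]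
  exact div_self hA.ne'

theorem min_condEntropy_le_min_conformal_bound_general
    {𝒳 𝒴 𝒜 : Type*} [Fintype 𝒳] [Fintype 𝒴] [Fintype 𝒜]
    [DecidableEq 𝒜] [DecidableEq 𝒴] [DecidableEq 𝒳]
    [Nonempty 𝒴]
    (μ : 𝒳 → 𝒴 → ℝ)
    (hμ0 : ∀ x y, 0 ≤ μ x y)
    (A : Finset 𝒳)
    (hA : 0 < ∑ x ∈ A, ∑ y, μ x y)
    (μA : 𝒳 → 𝒴 → ℝ)
    (hμA : ∀ x y, μA x y = if x ∈ A then μ x y / (∑ x' ∈ A, ∑ y', μ x' y') else 0)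
    (Q : Finset (𝒳 → 𝒜)) (hQ : Q.Nonempty)
    (C : (𝒳 → 𝒜) → 𝒜 → Finset 𝒴)
    (α α' : ℝ) (hα0 : 0 < α) (hα2 : α < 1 / 2)
    (hcov_lo : ∀ q ∈ Q, 1 - α ≤ ∑ x, ∑ y, if y ∈ C q (q x) then μA x y else 0)
    (hcov_hi : ∀ q ∈ Q, (∑ x, ∑ y, if y ∈ C q (q x) then μA x y else 0) ≤ 1 - α') :
    Q.inf' hQ (fun q => condEntQ μA q)
      ≤ Q.inf' hQ (fun q =>
          binEnt α + α * Real.log (Fintype.card 𝒴)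
            - (1 - α') * Real.log (1 - α)
            + (1 - α') *
                Real.log (∑ x, ∑ y, μA x y * ((C q (q x)).card : ℝ))) :=
  Finset.inf'_mono_fun fun q hq =>
    condEntQ_le_conformalBound μA (conditional_nonneg μ hμ0 A μA hμA)
      (sum_conditional_eq_one μ A hA μA hμA) q (C q) hα0 (by linarith) (hcov_lo q hq)
      (hcov_hi q hq)

/-- Let `μ` be a pmf on `𝒳 × 𝒴`, `A ⊆ 𝒳` an event of positive probability
and `μA` the conditional pmf given `X ∈ A`.  If for each query `q` in a finite nonempty
family `Q` there is a set-valued map `C q : 𝒜 → Finset 𝒴` whose coverage under `μA` lies in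
`[1 - α, 1 - α']` with `α ∈ (0, 1/2)` and `α' ∈ [0, α]`, then the minimum over `Q` of the
conditional entropies `H_{μA}(Y | q(X))` is at most the minimum over `Q` of the conformal
upper bounds. -/
theorem min_condEntropy_le_min_conformal_bound
    {𝒳 𝒴 𝒜 : Type*} [Fintype 𝒳] [Fintype 𝒴] [Fintype 𝒜]
    [DecidableEq 𝒜] [DecidableEq 𝒴] [DecidableEq 𝒳]
    [Nonempty 𝒳] [Nonempty 𝒴]
    (μ : 𝒳 → 𝒴 → ℝ)
    (hμ0 : ∀ x y, 0 ≤ μ x y)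
    (hμ1 : ∑ x, ∑ y, μ x y = 1)
    (A : Finset 𝒳)
    (hA : 0 < ∑ x ∈ A, ∑ y, μ x y)
    (μA : 𝒳 → 𝒴 → ℝ)
    (hμA : ∀ x y, μA x y = if x ∈ A then μ x y / (∑ x' ∈ A, ∑ y', μ x' y') else 0)
    (Q : Finset (𝒳 → 𝒜)) (hQ : Q.Nonempty)
    (C : (𝒳 → 𝒜) → 𝒜 → Finset 𝒴)
    (α α' : ℝ) (hα0 : 0 < α) (hα2 : α < 1 / 2)
    (hα'0 : 0 ≤ α') (hα'α : α' ≤ α)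
    (hcov_lo : ∀ q ∈ Q, 1 - α ≤ ∑ x, ∑ y, if y ∈ C q (q x) then μA x y else 0)
    (hcov_hi : ∀ q ∈ Q, (∑ x, ∑ y, if y ∈ C q (q x) then μA x y else 0) ≤ 1 - α') :
    Q.inf' hQ (fun q => condEntQ μA q)
      ≤ Q.inf' hQ (fun q =>
          binEnt α + α * Real.log (Fintype.card 𝒴)
            - (1 - α') * Real.log (1 - α)
            + (1 - α') *
                Real.log (∑ x, ∑ y, μA x y * ((C q (q x)).card : ℝ))) :=
  min_condEntropy_le_min_conformal_bound_general μ hμ0 A hA μA hμA Q hQ C α α' hα0 hα2 hcov_lo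
    hcov_hi
end

section
/- Let S_1, …, S_{N+1} be exchangeable real-valued random variables with N ≥ 1, and let 1 ≤ k ≤ N. Then P( S_{N+1} ≤ S_(k) ) ≥ k/(N+1), where S_(k) is the k-th smallest value among S_1, …, S_N. -/
/-!
Let `B j` be the event that `S j` is at most the `k`-th smallest of the other `N` variables.
Exchangeability gives every `B j` the probability of `B (last N)`. Pointwise, at least `k` of
the events occur: if `t` is the `k`-th smallest of all `N + 1` values, then fewer than `k` values
lie strictly below `t`, so each of the at least `k` indices `j` with `S j ≤ t` lies in `B j`.
Integrating, `k ≤ ∑ j, P (B j) = (N + 1) * P (B (last N))`.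
-/

open MeasureTheory

/-- The `k`-th smallest value (1-indexed) among the values `v 0, …, v (N-1)`. -/
noncomputable def orderStat (N : ℕ) (v : Fin N → ℝ) (k : ℕ) : ℝ :=
  (Multiset.sort (Multiset.map v Finset.univ.val) (· ≤ ·)).getD (k - 1) 0

open Finset
open scoped ENNReal

theorem List.Pairwise.getElem_iff_lt_countP {α : Type*} [Preorder α] {l : List α}
    (hl : l.Pairwise (· ≤ ·)) {p : α → Bool} (hp : ∀ ⦃a b⦄, a ≤ b → p b → p a) {i : ℕ}
    (hi : i < l.length) : p l[i] ↔ i < l.countP p := by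
  induction l generalizing i with
  | nil => simp at hi
  | cons a l ih =>
    obtain ⟨ha, hl⟩ := List.pairwise_cons.1 hl
    by_cases hpa : p a
    · cases i with
      | zero => simp [hpa]
      | succ i => simp [hpa, ih hl (Nat.lt_of_succ_lt_succ hi)]
    · have hnone : l.countP p = 0 :=
        List.countP_eq_zero.2 fun b hb hpb => hpa (hp (ha b hb) hpb)
      cases i with
      | zero => simp [hpa, hnone]
      | succ i =>
        simp only [List.getElem_cons_succ, List.countP_cons, hpa, hnone]
        exact iff_of_false (fun h => hpa (hp (ha _ (List.getElem_mem _)) h)) (by simp)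

section orderStat

variable {N k : ℕ}

theorem pred_orderStat_iff (hk1 : 1 ≤ k) (hkN : k ≤ N) (v : Fin N → ℝ) {p : ℝ → Prop}
    [DecidablePred p] (hp : ∀ ⦃a b⦄, a ≤ b → p b → p a) :
    p (orderStat N v k) ↔ k ≤ #{i | p (v i)} := by
  have hlen : (Multiset.sort (Multiset.map v univ.val) (· ≤ ·)).length = N := by simp
  have hsorted := (Multiset.pairwise_sort (Multiset.map v univ.val) (· ≤ ·)).getElem_iff_lt_countP
    (p := fun x => decide (p x)) (by simpa using hp) (i := k - 1) (by omega)
  rw [decide_eq_true_iff, ← Multiset.coe_countP, Multiset.sort_eq, Multiset.countP_map,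
    ← filter_val, ← card_def] at hsorted
  rw [orderStat, List.getD_eq_getElem _ _ (by omega), hsorted]
  omega

theorem orderStat_le_iff (hk1 : 1 ≤ k) (hkN : k ≤ N) (v : Fin N → ℝ) (t : ℝ) :
    orderStat N v k ≤ t ↔ k ≤ #{i | v i ≤ t} :=
  pred_orderStat_iff hk1 hkN v fun _ _ hab hb => hab.trans hb

theorem le_orderStat_iff (hk1 : 1 ≤ k) (hkN : k ≤ N) (v : Fin N → ℝ) (x : ℝ) :
    x ≤ orderStat N v k ↔ #{i | v i < x} < k := by
  rw [← not_lt, pred_orderStat_iff hk1 hkN v fun _ _ hab hb => hab.trans_lt hb, not_le]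

theorem measurable_orderStat (hk1 : 1 ≤ k) (hkN : k ≤ N) :
    Measurable fun v : Fin N → ℝ => orderStat N v k := by
  refine measurable_of_Iic fun t => ?_
  have hcount : Measurable fun v : Fin N → ℝ => #{i | v i ≤ t} := by
    simp_rw [card_filter]
    exact Finset.measurable_sum _ fun i _ =>
      Measurable.ite (measurableSet_le (measurable_pi_apply i) measurable_const)
        measurable_const measurable_const
  have hset : (fun v : Fin N → ℝ => orderStat N v k) ⁻¹' Set.Iic t =
      {v | k ≤ #{i | v i ≤ t}} := by
    ext v
    exact orderStat_le_iff hk1 hkN v t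
  rw [hset]
  exact measurableSet_le measurable_const hcount

end orderStat

theorem Fin.card_filter_succAbove {n : ℕ} (p : Fin (n + 1) → Prop) [DecidablePred p]
    {j : Fin (n + 1)} (hj : ¬p j) : #{i | p (j.succAbove i)} = #{i | p i} := by
  simp only [card_filter, Fin.sum_univ_succAbove _ j, hj, if_false, zero_add]

theorem le_card_filter_card_filter_lt {n k : ℕ} (hk1 : 1 ≤ k) (hkn : k ≤ n) (v : Fin n → ℝ) :
    k ≤ #{j | #{i | v i < v j} < k} := by
  set t := orderStat n v k
  have hbelow : #{i | v i < t} < k := (le_orderStat_iff hk1 hkn v t).1 le_rfl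
  calc k ≤ #{j | v j ≤ t} := (orderStat_le_iff hk1 hkn v t).1 le_rfl
    _ ≤ #{j | #{i | v i < v j} < k} := card_le_card fun j hj => by
      simp only [mem_filter, mem_univ, true_and] at hj ⊢
      exact (card_le_card (monotone_filter_right _ fun i _ (hi : v i < v j) =>
        hi.trans_le hj)).trans_lt hbelow

theorem le_card_filter_le_orderStat_succAbove {N k : ℕ} (hk1 : 1 ≤ k) (hkN : k ≤ N)
    (v : Fin (N + 1) → ℝ) : k ≤ #{j | v j ≤ orderStat N (v ∘ j.succAbove) k} := by
  simp_rw [le_orderStat_iff hk1 hkN, Function.comp_apply,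
    Fin.card_filter_succAbove (fun i => v i < v _) (lt_irrefl _)]
  exact le_card_filter_card_filter_lt hk1 (by omega) v

theorem Fin.exists_perm_last_castSucc {n : ℕ} (j : Fin (n + 1)) :
    ∃ σ : Equiv.Perm (Fin (n + 1)), σ (Fin.last n) = j ∧ σ ∘ Fin.castSucc = j.succAbove :=
  ⟨(finSuccEquiv' (Fin.last n)).trans (finSuccEquiv' j).symm, by simp,
    funext fun i => by simp [finSuccEquiv'_last_apply_castSucc]⟩

open scoped Classical in
theorem natCast_mul_measure_univ_le_sum_measure {α ι : Type*} [MeasurableSpace α] [Fintype ι]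
    (μ : Measure α) {B : ι → Set α} (hB : ∀ j, MeasurableSet (B j)) {k : ℕ}
    (hk : ∀ x, k ≤ #{j | x ∈ B j}) : k * μ Set.univ ≤ ∑ j, μ (B j) := by
  calc (k : ℝ≥0∞) * μ Set.univ = ∫⁻ _, (k : ℝ≥0∞) ∂μ := (lintegral_const _).symm
    _ ≤ ∫⁻ x, ∑ j, (B j).indicator 1 x ∂μ := lintegral_mono fun x => by
        simp only [Set.indicator_apply, Pi.one_apply, sum_boole]
        exact_mod_cast hk x
    _ = ∑ j, μ (B j) := by
        rw [lintegral_finsetSum _ fun j _ => measurable_one.indicator (hB j)]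
        simp [lintegral_indicator_one (hB _)]

def leOrderStatOfOthers (N k : ℕ) (j : Fin (N + 1)) : Set (Fin (N + 1) → ℝ) :=
  {v | v j ≤ orderStat N (v ∘ j.succAbove) k}

section leOrderStatOfOthers

variable {N k : ℕ}

theorem measurableSet_leOrderStatOfOthers (hk1 : 1 ≤ k) (hkN : k ≤ N) (j : Fin (N + 1)) :
    MeasurableSet (leOrderStatOfOthers N k j) :=
  measurableSet_le (measurable_pi_apply j)
    ((measurable_orderStat hk1 hkN).comp (by fun_prop))

theorem measure_leOrderStatOfOthers_eq_last (hk1 : 1 ≤ k) (hkN : k ≤ N)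
    {μ : Measure (Fin (N + 1) → ℝ)}
    (hμ : ∀ σ : Equiv.Perm (Fin (N + 1)), μ.map (fun v => v ∘ σ) = μ) (j : Fin (N + 1)) :
    μ (leOrderStatOfOthers N k j) = μ (leOrderStatOfOthers N k (Fin.last N)) := by
  obtain ⟨σ, hσlast, hσcast⟩ := Fin.exists_perm_last_castSucc j
  have hpre : (fun v => v ∘ σ) ⁻¹' leOrderStatOfOthers N k (Fin.last N) =
      leOrderStatOfOthers N k j := by
    ext v
    simp [leOrderStatOfOthers, Function.comp_assoc, hσlast, hσcast]
  rw [← hpre]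
  exact (MeasurePreserving.mk (by fun_prop) (hμ σ)).measure_preimage
    (measurableSet_leOrderStatOfOthers hk1 hkN _).nullMeasurableSet

theorem div_le_measure_leOrderStatOfOthers (hk1 : 1 ≤ k) (hkN : k ≤ N)
    (μ : Measure (Fin (N + 1) → ℝ)) [IsProbabilityMeasure μ]
    (hμ : ∀ σ : Equiv.Perm (Fin (N + 1)), μ.map (fun v => v ∘ σ) = μ) :
    (k : ℝ≥0∞) / (N + 1) ≤ μ (leOrderStatOfOthers N k (Fin.last N)) := by
  have hcover := natCast_mul_measure_univ_le_sum_measure μ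
    (measurableSet_leOrderStatOfOthers hk1 hkN) (le_card_filter_le_orderStat_succAbove hk1 hkN)
  rw [measure_univ, mul_one, Fintype.sum_congr _ _ (measure_leOrderStatOfOthers_eq_last hk1 hkN hμ),
    sum_const, card_univ, Fintype.card_fin, nsmul_eq_mul] at hcover
  rw [ENNReal.div_le_iff (by positivity) (by simp)]
  simpa [mul_comm] using hcover

end leOrderStatOfOthers

theorem exchangeable_rank_lower_bound_general
    {Ω : Type*} [MeasurableSpace Ω] (P : Measure Ω) [IsProbabilityMeasure P]
    (N : ℕ)
    (S : Fin (N + 1) → Ω → ℝ)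
    (hSmeas : ∀ i, Measurable (S i))
    (hexch : ∀ σ : Equiv.Perm (Fin (N + 1)),
      Measure.map (fun ω i => S (σ i) ω) P = Measure.map (fun ω i => S i ω) P)
    (k : ℕ) (hk1 : 1 ≤ k) (hkN : k ≤ N) :
    (k : ENNReal) / (N + 1)
      ≤ P {ω | S (Fin.last N) ω ≤ orderStat N (fun i => S i.castSucc ω) k} := by
  have hS : Measurable fun ω i => S i ω := measurable_pi_lambda _ hSmeas
  have : IsProbabilityMeasure (P.map fun ω i => S i ω) :=
    Measure.isProbabilityMeasure_map hS.aemeasurable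
  have hlaw := div_le_measure_leOrderStatOfOthers hk1 hkN (P.map fun ω i => S i ω)
    fun σ => by
      rw [Measure.map_map (by fun_prop) hS]
      exact hexch σ
  rw [Measure.map_apply hS (measurableSet_leOrderStatOfOthers hk1 hkN _)] at hlaw
  simpa [leOrderStatOfOthers, Fin.succAbove_last, Function.comp_def] using hlaw

/-- If `S 0, …, S N` (that is, `N + 1` variables, `N ≥ 1`) are exchangeable
real-valued random variables and `1 ≤ k ≤ N`, then
`P(S_{N+1} ≤ S_(k)) ≥ k / (N + 1)`, where `S_(k)` is the `k`-th smallest among the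
first `N` variables. -/
theorem exchangeable_rank_lower_bound
    {Ω : Type*} [MeasurableSpace Ω] (P : Measure Ω) [IsProbabilityMeasure P]
    (N : ℕ) (hN : 1 ≤ N)
    (S : Fin (N + 1) → Ω → ℝ)
    (hSmeas : ∀ i, Measurable (S i))
    (hexch : ∀ σ : Equiv.Perm (Fin (N + 1)),
      Measure.map (fun ω i => S (σ i) ω) P = Measure.map (fun ω i => S i ω) P)
    (k : ℕ) (hk1 : 1 ≤ k) (hkN : k ≤ N) :
    (k : ENNReal) / (N + 1)
      ≤ P {ω | S (Fin.last N) ω ≤ orderStat N (fun i => S i.castSucc ω) k} :=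
  exchangeable_rank_lower_bound_general P N S hSmeas hexch k hk1 hkN
end

section
/- Let S_1, …, S_{N+1} be exchangeable real-valued random variables with N ≥ 1, and suppose in addition that P(S_i = S_j) = 0 for all i ≠ j. Then for every 1 ≤ k ≤ N, P( S_{N+1} ≤ S_(k) ) = k/(N+1), where S_(k) is the k-th smallest value among S_1, …, S_N. -/
open MeasureTheory

open Finset

private noncomputable def rnk {n : ℕ} (v : Fin n → ℝ) (j : Fin n) : ℕ :=
  (Finset.univ.filter fun i => v i ≤ v j).card

private lemma rnk_lt {n : ℕ} {v : Fin n → ℝ} {j j' : Fin n} (h : v j < v j') :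
    rnk v j < rnk v j' := by
  apply Finset.card_lt_card
  constructor
  · intro i hi
    simp only [mem_filter, mem_univ, true_and] at *
    exact hi.trans h.le
  · intro hsub
    have := hsub (mem_filter.2 ⟨mem_univ j', le_rfl⟩)
    simp only [mem_filter, mem_univ, true_and] at this
    exact absurd this (not_le.2 h)

private lemma card_rnk_le {n k : ℕ} (hk : k ≤ n) {v : Fin n → ℝ}
    (hv : Function.Injective v) :
    (Finset.univ.filter fun j => rnk v j ≤ k).card = k := by
  have hinj : Function.Injective (rnk v) := by
    intro a b hab
    by_contra hne
    rcases (hv.ne hne).lt_or_gt with h | h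
    · exact absurd hab (rnk_lt h).ne
    · exact absurd hab.symm (rnk_lt h).ne
  have himg : Finset.univ.image (rnk v) = Finset.Icc 1 n := by
    apply Finset.eq_of_subset_of_card_le
    · intro m hm
      simp only [mem_image, mem_univ, true_and] at hm
      obtain ⟨j, rfl⟩ := hm
      simp only [Finset.mem_Icc]
      refine ⟨Finset.card_pos.2 ⟨j, mem_filter.2 ⟨mem_univ _, le_rfl⟩⟩, ?_⟩
      exact (Finset.card_filter_le _ _).trans (by simp)
    · rw [Finset.card_image_of_injective _ hinj]
      simp
  calc (univ.filter fun j => rnk v j ≤ k).card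
      = ((univ.filter fun j => rnk v j ≤ k).image (rnk v)).card :=
        (Finset.card_image_of_injective _ hinj).symm
    _ = ((univ.image (rnk v)).filter (· ≤ k)).card := by rw [Finset.filter_image]
    _ = ((Finset.Icc 1 n).filter (· ≤ k)).card := by rw [himg]
    _ = (Finset.Icc 1 k).card := by
        congr 1; ext m; simp only [mem_filter, Finset.mem_Icc]; omega
    _ = k := by simp

private lemma sorted_getElem_lt_iff {l : List ℝ} (hl : l.Pairwise (· ≤ ·)) {t : ℝ} {a : ℕ}
    (ha : a < l.length) :
    l[a] < t ↔ a < l.countP (fun x => decide (x < t)) := by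
  constructor
  · intro h
    have h1 : (l.take (a + 1)).countP (fun x => decide (x < t))
        = (l.take (a + 1)).length := by
      rw [List.countP_eq_length]
      intro x hx
      rw [List.mem_iff_getElem] at hx
      obtain ⟨i, hi, rfl⟩ := hx
      rw [List.getElem_take]
      simp only [decide_eq_true_eq]
      refine lt_of_le_of_lt ?_ h
      have hi' : i < l.length := lt_of_lt_of_le hi (by simp)
      have hia : i ≤ a := by
        simp only [List.length_take] at hi; omega
      exact hl.rel_get_of_le (a := ⟨i, hi'⟩) (b := ⟨a, ha⟩) (Fin.mk_le_mk.mpr hia)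
    have h2 := (List.take_sublist (a + 1) l).countP_le (p := fun x => decide (x < t))
    have h3 : (l.take (a + 1)).length = a + 1 := by
      rw [List.length_take]; omega
    omega
  · intro h
    by_contra hc
    push_neg at hc
    have h0 : (l.drop a).countP (fun x => decide (x < t)) = 0 := by
      rw [List.countP_eq_zero]
      intro x hx
      rw [List.mem_iff_getElem] at hx
      obtain ⟨i, hi, rfl⟩ := hx
      have hlen : (l.drop a).length = l.length - a := List.length_drop
      rw [List.getElem_drop]
      simp only [decide_eq_true_eq, not_lt]
      refine hc.trans ?_
      exact hl.rel_get_of_le (a := ⟨a, ha⟩) (b := ⟨a + i, by omega⟩) (Fin.mk_le_mk.mpr (by omega))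
    have hsplit : l.countP (fun x => decide (x < t))
        = (l.take a).countP (fun x => decide (x < t))
          + (l.drop a).countP (fun x => decide (x < t)) := by
      conv_lhs => rw [← List.take_append_drop a l]
      rw [List.countP_append]
    have h4 := List.countP_le_length (l := l.take a) (p := fun x => decide (x < t))
    have h5 : (l.take a).length ≤ a := by simp
    omega

private lemma key_iff {N k : ℕ} (hk1 : 1 ≤ k) (hkN : k ≤ N)
    (w : Fin (N + 1) → ℝ) (hw : Function.Injective w) :
    (w (Fin.last N) ≤ orderStat N (fun i => w i.castSucc) k)
      ↔ rnk w (Fin.last N) ≤ k := by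
  set v : Fin N → ℝ := fun i => w i.castSucc with hv
  set t : ℝ := w (Fin.last N) with ht
  set l : List ℝ := Multiset.sort (Multiset.map v Finset.univ.val) (· ≤ ·) with hldef
  have hsorted : l.Pairwise (· ≤ ·) := Multiset.pairwise_sort _ _
  have hlen : l.length = N := by
    rw [hldef, Multiset.length_sort, Multiset.card_map]
    simp
  have ha : k - 1 < l.length := by omega
  have hos : orderStat N v k = l[k - 1] := by
    rw [orderStat]
    exact List.getD_eq_getElem l 0 ha
  have hm : l.countP (fun x => decide (x < t))
      = (Finset.univ.filter fun i : Fin N => v i < t).card := by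
    have h1 : (Multiset.countP (fun x => x < t) (Multiset.map v Finset.univ.val) : ℕ)
        = l.countP (fun x => decide (x < t)) := by
      conv_lhs => rw [← Multiset.sort_eq (Multiset.map v Finset.univ.val) (· ≤ ·)]
      exact Multiset.coe_countP (p := fun x => x < t) l
    rw [← h1, Multiset.countP_map]
    rfl
  have hrnk : rnk w (Fin.last N)
      = (Finset.univ.filter fun i : Fin N => v i < t).card + 1 := by
    unfold rnk
    rw [Finset.card_filter, Fin.sum_univ_castSucc, Finset.card_filter]
    have hlast : (if w (Fin.last N) ≤ t then 1 else 0) = 1 := if_pos le_rfl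
    rw [hlast]
    congr 1
    apply Finset.sum_congr rfl
    intro i _
    congr 1
    have hne : v i ≠ t := hw.ne (Fin.castSucc_lt_last i).ne
    exact propext ⟨fun h => hne.lt_of_le h, le_of_lt⟩
  rw [hos, hrnk, ← not_lt, sorted_getElem_lt_iff hsorted ha, hm, not_lt]
  omega

private lemma rnk_comp {n : ℕ} (v : Fin n → ℝ) (σ : Equiv.Perm (Fin n)) (j : Fin n) :
    rnk (fun i => v (σ i)) j = rnk v (σ j) := by
  unfold rnk
  have h : (Finset.univ.filter fun i => v (σ i) ≤ v (σ j))
      = (Finset.univ.filter fun i => v i ≤ v (σ j)).image σ.symm := by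
    ext i
    simp only [Finset.mem_filter, Finset.mem_univ, true_and, Finset.mem_image]
    constructor
    · intro hle; exact ⟨σ i, hle, σ.symm_apply_apply i⟩
    · rintro ⟨a, ha, rfl⟩; simpa using ha
  rw [h, Finset.card_image_of_injective _ σ.symm.injective]

private lemma meas_rnk {n : ℕ} (j : Fin n) :
    Measurable fun v : Fin n → ℝ => rnk v j := by
  unfold rnk
  simp_rw [Finset.card_filter]
  apply Finset.measurable_sum
  intro i _
  exact Measurable.ite (measurableSet_le (measurable_pi_apply i) (measurable_pi_apply j))
    measurable_const measurable_const

/-- If `S 0, …, S N` (that is, `N + 1` variables, `N ≥ 1`) are exchangeable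
real-valued random variables such that `P(S i = S j) = 0` for all `i ≠ j`, then for every
`1 ≤ k ≤ N`, `P(S_{N+1} ≤ S_(k)) = k / (N + 1)`, where `S_(k)` is the `k`-th smallest among
the first `N` variables. -/
theorem exchangeable_rank_exact_of_no_ties
    {Ω : Type*} [MeasurableSpace Ω] (P : Measure Ω) [IsProbabilityMeasure P]
    (N : ℕ) (hN : 1 ≤ N)
    (S : Fin (N + 1) → Ω → ℝ)
    (hSmeas : ∀ i, Measurable (S i))
    (hexch : ∀ σ : Equiv.Perm (Fin (N + 1)),
      Measure.map (fun ω i => S (σ i) ω) P = Measure.map (fun ω i => S i ω) P)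
    (hties : ∀ i j : Fin (N + 1), i ≠ j → P {ω | S i ω = S j ω} = 0)
    (k : ℕ) (hk1 : 1 ≤ k) (hkN : k ≤ N) :
    P {ω | S (Fin.last N) ω ≤ orderStat N (fun i => S i.castSucc ω) k}
      = (k : ENNReal) / (N + 1) := by
  classical
  set X : Ω → (Fin (N + 1) → ℝ) := fun ω i => S i ω with hX
  have hXmeas : Measurable X := measurable_pi_lambda _ hSmeas
  set C : Fin (N + 1) → Set (Fin (N + 1) → ℝ) := fun j => {v | rnk v j ≤ k} with hC
  have hCmeas : ∀ j, MeasurableSet (C j) := by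
    intro j
    have : C j = (fun v => rnk v j) ⁻¹' (Set.Iic k) := rfl
    rw [this]
    exact (meas_rnk j) measurableSet_Iic
  set B : Fin (N + 1) → Set Ω := fun j => X ⁻¹' (C j) with hB
  have hBmeas : ∀ j, MeasurableSet (B j) := fun j => hXmeas (hCmeas j)
  set D : Set Ω := ⋃ i, ⋃ j, ⋃ (_ : i ≠ j), {ω | S i ω = S j ω} with hD
  have hDnull : P D = 0 :=
    measure_iUnion_null fun i => measure_iUnion_null fun j =>
      measure_iUnion_null fun h => hties i j h
  have hinj : ∀ ω ∉ D, Function.Injective (X ω) := by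
    intro ω hω i j hij
    by_contra hne
    exact hω (Set.mem_iUnion.2 ⟨i, Set.mem_iUnion.2 ⟨j, Set.mem_iUnion.2 ⟨hne, hij⟩⟩⟩)
  have hBeq : ∀ j, P (B j) = P (B (Fin.last N)) := by
    intro j
    set σ := Equiv.swap j (Fin.last N) with hσ
    have hmeas2 : Measurable (fun ω i => S (σ i) ω) :=
      measurable_pi_lambda _ fun i => hSmeas (σ i)
    have h1 := congrArg (fun μ => μ (C (Fin.last N))) (hexch σ)
    rw [Measure.map_apply hmeas2 (hCmeas _), Measure.map_apply hXmeas (hCmeas _)] at h1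
    have h2 : (fun ω i => S (σ i) ω) ⁻¹' C (Fin.last N) = B j := by
      ext ω
      simp only [hB, hC, Set.mem_preimage, Set.mem_setOf_eq]
      have := rnk_comp (X ω) σ (Fin.last N)
      rw [show (fun i => S (σ i) ω) = (fun i => X ω (σ i)) from rfl, this,
        Equiv.swap_apply_right]
    rw [h2] at h1
    exact h1.symm ▸ h1
  have hsum : ∑ j : Fin (N + 1), P (B j) = k := by
    calc ∑ j : Fin (N + 1), P (B j)
        = ∑ j : Fin (N + 1), ∫⁻ ω, (B j).indicator (fun _ => (1 : ENNReal)) ω ∂P :=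
          Finset.sum_congr rfl fun j _ => (lintegral_indicator_one (hBmeas j)).symm
      _ = ∫⁻ ω, ∑ j : Fin (N + 1), (B j).indicator (fun _ => (1 : ENNReal)) ω ∂P :=
          (lintegral_finset_sum _ fun j _ => measurable_one.indicator (hBmeas j)).symm
      _ = ∫⁻ _ω, (k : ENNReal) ∂P := by
          apply lintegral_congr_ae
          filter_upwards [compl_mem_ae_iff.2 hDnull] with ω hω
          have hwinj := hinj ω hω
          have hcard : (Finset.univ.filter fun j => rnk (X ω) j ≤ k).card = k :=
            card_rnk_le (by omega) hwinj
          calc ∑ j : Fin (N + 1), (B j).indicator (fun _ => (1 : ENNReal)) ω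
              = ∑ j : Fin (N + 1), (if rnk (X ω) j ≤ k then (1 : ENNReal) else 0) := by
                apply Finset.sum_congr rfl
                intro j _
                rw [Set.indicator_apply]
                simp only [hB, hC, Set.mem_preimage, Set.mem_setOf_eq]
            _ = ((Finset.univ.filter fun j => rnk (X ω) j ≤ k).card : ENNReal) :=
                Finset.sum_boole _ _
            _ = (k : ENNReal) := by rw [hcard]
      _ = (k : ENNReal) := by simp
  have hmul : ((N : ENNReal) + 1) * P (B (Fin.last N)) = k := by
    rw [← hsum, Finset.sum_congr rfl fun j _ => hBeq j, Finset.sum_const,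
      Finset.card_univ, Fintype.card_fin, nsmul_eq_mul]
    push_cast
    ring
  have hEB : P {ω | S (Fin.last N) ω ≤ orderStat N (fun i => S i.castSucc ω) k}
      = P (B (Fin.last N)) := by
    apply measure_congr
    filter_upwards [compl_mem_ae_iff.2 hDnull] with ω hω
    have hiff := key_iff hk1 hkN (X ω) (hinj ω hω)
    exact propext hiff
  rw [hEB, ENNReal.eq_div_iff (by simp) (by simp)]
  exact hmul
end
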